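/- Let C be a bivariate copula admitting a tail dependence function Λ, and let μ be a tail generating measure satisfying the following condition: there exists u₀ ∈ (0,1) such that μ(B_ε(u₀,u₀) ∩ [0,1]²) > 0 for every ε > 0, where B_ε(u₀,u₀) is the open ball of radius ε centered at (u₀,u₀). If λ_μ(C) = 1, then the tail dependence coefficient λ(C) = Λ(1,1) equals 1 (and hence, under this condition, λ_μ(C) = 1 if and only if λ(C) = 1). -/

import Mathlib

open MeasureTheory Filter Set

/-- A bivariate copula: `C : [0,1]² → [0,1]` with the grounded/marginal conditions and
the 2-increasing property. -/
def IsCopula (C : ℝ → ℝ → ℝ) : Prop :=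
  (∀ u ∈ Icc (0:ℝ) 1, ∀ v ∈ Icc (0:ℝ) 1, C u v ∈ Icc (0:ℝ) 1) ∧
  (∀ u ∈ Icc (0:ℝ) 1, C u 0 = 0 ∧ C 0 u = 0 ∧ C u 1 = u ∧ C 1 u = u) ∧
  (∀ u u' v v' : ℝ, u ∈ Icc (0:ℝ) 1 → u' ∈ Icc (0:ℝ) 1 →
    v ∈ Icc (0:ℝ) 1 → v' ∈ Icc (0:ℝ) 1 → u ≤ u' → v ≤ v' →
    0 ≤ C u' v' - C u' v - C u v' + C u v)

/-- `Λ` is the tail dependence function of `C`: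
`Λ(u,v) = lim_{p↓0} C(pu,pv)/p` for every `(u,v) ∈ [0,∞)²`. -/
def HasTDF (C Λ : ℝ → ℝ → ℝ) : Prop :=
  ∀ u v : ℝ, 0 ≤ u → 0 ≤ v →
    Tendsto (fun p : ℝ => C (p * u) (p * v) / p)
      (nhdsWithin (0:ℝ) (Ioi 0)) (nhds (Λ u v))

/-- A tail generating measure: a Borel probability measure on `[0,1]²` whose mass is not
concentrated on `{u = 0} ∪ {v = 0}`. -/
def IsTailGenMeasure (μ : Measure (ℝ × ℝ)) : Prop :=
  IsProbabilityMeasure μ ∧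
  μ ((Icc (0:ℝ) 1 ×ˢ Icc (0:ℝ) 1)ᶜ) = 0 ∧
  μ {q : ℝ × ℝ | q.1 = 0 ∨ q.2 = 0} < 1

/-- The μ-tail dependence measure: `λ_μ = (∫ Λ dμ) / (∫ min dμ)`, applied to
the tail dependence function `Λ` of the copula. -/
noncomputable def tdm (Λ : ℝ → ℝ → ℝ) (μ : Measure (ℝ × ℝ)) : ℝ :=
  (∫ q, Λ q.1 q.2 ∂μ) / (∫ q : ℝ × ℝ, min q.1 q.2 ∂μ)

/-
`Λ(u,v) ≤ min(u,v)` pointwise, so `λ_μ(C) = 1` forces `Λ = min` μ-almost everywhere.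
Since `Λ` is monotone and `Λ(t,t) = t Λ(1,1)`, every such point satisfies
`min(u,v) ≤ max(u,v) Λ(1,1)`, a closed condition. The point `(u₀,u₀)` lies in the
support of `μ`, hence satisfies it too, so `u₀ ≤ u₀ Λ(1,1)` and `Λ(1,1) = 1`.
Conversely, if `Λ(1,1) = 1` then `min(u,v) = Λ(m,m) ≤ Λ(u,v) ≤ min(u,v)` with
`m = min(u,v)`, so `Λ = min` and `λ_μ(C) = 1`.
-/

open scoped Topology

namespace IsCopula

variable {C : ℝ → ℝ → ℝ} (hC : IsCopula C) {u u' v v' : ℝ}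
include hC

lemma nonneg (hu : u ∈ Icc (0:ℝ) 1) (hv : v ∈ Icc (0:ℝ) 1) : 0 ≤ C u v :=
  (hC.1 u hu v hv).1

lemma mono_left (hu : u ∈ Icc (0:ℝ) 1) (hu' : u' ∈ Icc (0:ℝ) 1) (hv : v ∈ Icc (0:ℝ) 1)
    (h : u ≤ u') : C u v ≤ C u' v := by
  have := hC.2.2 u u' 0 v hu hu' (by simp) hv h hv.1
  linarith [(hC.2.1 u hu).1, (hC.2.1 u' hu').1]

lemma mono_right (hu : u ∈ Icc (0:ℝ) 1) (hv : v ∈ Icc (0:ℝ) 1) (hv' : v' ∈ Icc (0:ℝ) 1)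
    (h : v ≤ v') : C u v ≤ C u v' := by
  have := hC.2.2 0 u v v' (by simp) hu hv hv' hu.1 h
  linarith [(hC.2.1 v hv).2.1, (hC.2.1 v' hv').2.1]

lemma le_min (hu : u ∈ Icc (0:ℝ) 1) (hv : v ∈ Icc (0:ℝ) 1) : C u v ≤ min u v := by
  refine _root_.le_min ?_ ?_
  · simpa [(hC.2.1 u hu).2.2.1] using hC.mono_right hu hv (by simp) hv.2
  · simpa [(hC.2.1 v hv).2.2.2] using hC.mono_left hu (by simp) hv hu.2

end IsCopula

lemma eventually_mul_mem_unit_Icc {u : ℝ} (hu : 0 ≤ u) :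
    ∀ᶠ p in 𝓝[>] (0:ℝ), p * u ∈ Icc (0:ℝ) 1 := by
  have hlim : Tendsto (fun p : ℝ => p * u) (𝓝[>] 0) (𝓝 0) := by
    simpa using ((continuous_mul_const u).tendsto 0).mono_left nhdsWithin_le_nhds
  filter_upwards [self_mem_nhdsWithin, hlim.eventually (gt_mem_nhds one_pos)] with p hp hp1
  exact ⟨mul_nonneg (le_of_lt hp) hu, hp1.le⟩

namespace HasTDF

variable {C Λ : ℝ → ℝ → ℝ} (hΛ : HasTDF C Λ) {u u' v v' : ℝ}
include hΛ

lemma homogeneous {t : ℝ} (ht : 0 < t) (hu : 0 ≤ u) (hv : 0 ≤ v) :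
    Λ (t * u) (t * v) = t * Λ u v := by
  have hscale : Tendsto (t * ·) (𝓝[>] (0:ℝ)) (𝓝[>] 0) :=
    tendsto_comap.mono_left (comap_mulLeft_nhdsGT_zero ht).ge
  refine tendsto_nhds_unique (hΛ _ _ (by positivity) (by positivity))
    (((hΛ u v hu hv).comp hscale).const_mul t |>.congr' ?_)
  filter_upwards [self_mem_nhdsWithin] with p (hp : 0 < p)
  simp only [Function.comp_apply, mul_assoc]
  field_simp

lemma diag_eq {t : ℝ} (ht : 0 < t) : Λ t t = t * Λ 1 1 := by
  simpa using hΛ.homogeneous ht zero_le_one zero_le_one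

variable (hC : IsCopula C)
include hC

lemma nonneg (hu : 0 ≤ u) (hv : 0 ≤ v) : 0 ≤ Λ u v := by
  refine ge_of_tendsto (hΛ u v hu hv) ?_
  filter_upwards [self_mem_nhdsWithin, eventually_mul_mem_unit_Icc hu,
    eventually_mul_mem_unit_Icc hv] with p (hp : 0 < p) hpu hpv
  exact div_nonneg (hC.nonneg hpu hpv) hp.le

lemma le_min (hu : 0 ≤ u) (hv : 0 ≤ v) : Λ u v ≤ min u v := by
  refine le_of_tendsto (hΛ u v hu hv) ?_
  filter_upwards [self_mem_nhdsWithin, eventually_mul_mem_unit_Icc hu,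
    eventually_mul_mem_unit_Icc hv] with p (hp : 0 < p) hpu hpv
  rw [div_le_iff₀ hp, mul_comm (min u v), mul_min_of_nonneg _ _ hp.le]
  exact hC.le_min hpu hpv

lemma mono (hu : 0 ≤ u) (hv : 0 ≤ v) (huu : u ≤ u') (hvv : v ≤ v') :
    Λ u v ≤ Λ u' v' := by
  have hu' : 0 ≤ u' := hu.trans huu
  have hv' : 0 ≤ v' := hv.trans hvv
  refine le_of_tendsto_of_tendsto (hΛ u v hu hv) (hΛ u' v' hu' hv') ?_
  filter_upwards [self_mem_nhdsWithin, eventually_mul_mem_unit_Icc hu',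
    eventually_mul_mem_unit_Icc hv'] with p (hp : 0 < p) hpu' hpv'
  have hpu : p * u ∈ Icc (0:ℝ) 1 :=
    ⟨by positivity, (mul_le_mul_of_nonneg_left huu hp.le).trans hpu'.2⟩
  have hpv : p * v ∈ Icc (0:ℝ) 1 :=
    ⟨by positivity, (mul_le_mul_of_nonneg_left hvv hp.le).trans hpv'.2⟩
  gcongr
  calc C (p * u) (p * v) ≤ C (p * u') (p * v) :=
        hC.mono_left hpu hpu' hpv (mul_le_mul_of_nonneg_left huu hp.le)
    _ ≤ C (p * u') (p * v') := hC.mono_right hpu' hpv hpv' (mul_le_mul_of_nonneg_left hvv hp.le)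

lemma le_max_mul (hu : 0 ≤ u) (hv : 0 ≤ v) : Λ u v ≤ max u v * Λ 1 1 := by
  rcases (le_max_of_le_left hu).eq_or_lt with hmax | hmax
  · have hu0 : u = 0 := le_antisymm (hmax ▸ le_max_left u v) hu
    have hv0 : v = 0 := le_antisymm (hmax ▸ le_max_right u v) hv
    simpa [hu0, hv0] using hΛ.le_min hC le_rfl le_rfl
  · rw [← hΛ.diag_eq hmax]
    exact hΛ.mono hC hu hv (le_max_left u v) (le_max_right u v)

lemma eq_min_of_tdc_eq_one (hL : Λ 1 1 = 1) (hu : 0 ≤ u) (hv : 0 ≤ v) : Λ u v = min u v := by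
  refine le_antisymm (hΛ.le_min hC hu hv) ?_
  rcases (_root_.le_min hu hv).eq_or_lt with hm | hm
  · rw [← hm]
    exact hΛ.nonneg hC hu hv
  · calc min u v = Λ (min u v) (min u v) := by rw [hΛ.diag_eq hm, hL, mul_one]
      _ ≤ Λ u v := hΛ.mono hC hm.le hm.le (min_le_left u v) (min_le_right u v)

end HasTDF

lemma mem_of_ae_mem_of_forall_measure_ball_pos {X : Type*} [PseudoMetricSpace X]
    [MeasurableSpace X] {μ : Measure X} {F : Set X} {x : X} (hF : IsClosed F)
    (hae : ∀ᵐ y ∂μ, y ∈ F) (hx : ∀ ε > 0, 0 < μ (Metric.ball x ε)) : x ∈ F := by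
  refine hF.closure_subset_iff.2 subset_rfl (Metric.mem_closure_iff.2 fun ε hε => ?_)
  obtain ⟨y, hy, hyF⟩ :=
    Measure.exists_mem_of_measure_ne_zero_of_ae (hx ε hε).ne' (ae_restrict_of_ae hae)
  exact ⟨y, hyF, Metric.mem_ball'.1 hy⟩

namespace IsTailGenMeasure

variable {μ : Measure (ℝ × ℝ)} (hμ : IsTailGenMeasure μ)
include hμ

lemma ae_mem_unit_square : ∀ᵐ q ∂μ, q ∈ Icc (0:ℝ) 1 ×ˢ Icc (0:ℝ) 1 :=
  ae_iff.2 hμ.2.1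

lemma integrable_min : Integrable (fun q : ℝ × ℝ => min q.1 q.2) μ := by
  have := hμ.1
  refine Integrable.of_bound (by fun_prop) 1 ?_
  filter_upwards [hμ.ae_mem_unit_square] with q hq
  rw [Real.norm_of_nonneg (_root_.le_min hq.1.1 hq.2.1)]
  exact (min_le_left _ _).trans hq.1.2

lemma integral_min_pos : 0 < ∫ q, min q.1 q.2 ∂μ := by
  have := hμ.1
  have hnonneg : 0 ≤ᵐ[μ] fun q : ℝ × ℝ => min q.1 q.2 := by
    filter_upwards [hμ.ae_mem_unit_square] with q hq
    exact _root_.le_min hq.1.1 hq.2.1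
  refine (integral_nonneg_of_ae hnonneg).lt_of_ne fun h => ?_
  have hzero := (integral_eq_zero_iff_of_nonneg_ae hnonneg hμ.integrable_min).1 h.symm
  have haxes : ∀ᵐ q ∂μ, q ∈ {q : ℝ × ℝ | q.1 = 0 ∨ q.2 = 0} := by
    filter_upwards [hzero, hμ.ae_mem_unit_square] with q hq hQ
    rcases min_choice q.1 q.2 with hm | hm <;> simp_all
  have haxes_full : μ {q : ℝ × ℝ | q.1 = 0 ∨ q.2 = 0} = 1 := by
    rw [measure_congr (ae_eq_univ.2 (ae_iff.1 haxes)), measure_univ]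
  exact hμ.2.2.ne haxes_full

end IsTailGenMeasure

lemma ae_eq_min_of_tdm_eq_one {C Λ : ℝ → ℝ → ℝ} (hC : IsCopula C) (hΛ : HasTDF C Λ)
    {μ : Measure (ℝ × ℝ)} (hμ : IsTailGenMeasure μ) (h : tdm Λ μ = 1) :
    ∀ᵐ q ∂μ, Λ q.1 q.2 = min q.1 q.2 := by
  -- a non-integrable `Λ` has Bochner integral `0`, hence `tdm Λ μ = 0`
  have hint : Integrable (fun q : ℝ × ℝ => Λ q.1 q.2) μ := by
    by_contra hint
    rw [tdm, integral_undef hint, zero_div] at h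
    exact zero_ne_one h
  rw [tdm, div_eq_one_iff_eq hμ.integral_min_pos.ne'] at h
  refine (integral_eq_iff_of_ae_le hint hμ.integrable_min ?_).1 h
  filter_upwards [hμ.ae_mem_unit_square] with q hq
  exact hΛ.le_min hC hq.1.1 hq.2.1

lemma tdc_eq_one_of_tdm_eq_one {C Λ : ℝ → ℝ → ℝ} (hC : IsCopula C) (hΛ : HasTDF C Λ)
    {μ : Measure (ℝ × ℝ)} (hμ : IsTailGenMeasure μ) {u₀ : ℝ} (hu₀ : 0 < u₀)
    (hball : ∀ ε > 0, 0 < μ (Metric.ball (u₀, u₀) ε)) (h : tdm Λ μ = 1) :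
    Λ 1 1 = 1 := by
  let F : Set (ℝ × ℝ) := {q | min q.1 q.2 ≤ max q.1 q.2 * Λ 1 1}
  have hF : IsClosed F := isClosed_le (by fun_prop) (by fun_prop)
  have haeF : ∀ᵐ q ∂μ, q ∈ F := by
    filter_upwards [ae_eq_min_of_tdm_eq_one hC hΛ hμ h, hμ.ae_mem_unit_square] with q hq hQ
    show min q.1 q.2 ≤ _
    rw [← hq]
    exact hΛ.le_max_mul hC hQ.1.1 hQ.2.1
  have hge : u₀ * 1 ≤ u₀ * Λ 1 1 := by
    simpa [F] using mem_of_ae_mem_of_forall_measure_ball_pos hF haeF hball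
  have hle : Λ 1 1 ≤ 1 := by simpa using hΛ.le_min hC zero_le_one zero_le_one
  exact le_antisymm hle (le_of_mul_le_mul_left hge hu₀)

lemma tdm_eq_one_of_tdc_eq_one {C Λ : ℝ → ℝ → ℝ} (hC : IsCopula C) (hΛ : HasTDF C Λ)
    {μ : Measure (ℝ × ℝ)} (hμ : IsTailGenMeasure μ) (hL : Λ 1 1 = 1) : tdm Λ μ = 1 := by
  have heq : (fun q : ℝ × ℝ => Λ q.1 q.2) =ᵐ[μ] fun q => min q.1 q.2 := by
    filter_upwards [hμ.ae_mem_unit_square] with q hq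
    exact hΛ.eq_min_of_tdc_eq_one hC hL hq.1.1 hq.2.1
  rw [tdm, integral_congr_ae heq, div_self hμ.integral_min_pos.ne']

theorem tdm_one_iff_tdc_one (C Λ : ℝ → ℝ → ℝ)
    (hC : IsCopula C) (hΛ : HasTDF C Λ)
    (μ : Measure (ℝ × ℝ)) (hμ : IsTailGenMeasure μ)
    (hdiag : ∃ u₀ : ℝ, u₀ ∈ Ioo (0:ℝ) 1 ∧ ∀ ε : ℝ, 0 < ε →
      0 < μ (Metric.ball ((u₀, u₀) : ℝ × ℝ) ε ∩ (Icc (0:ℝ) 1 ×ˢ Icc (0:ℝ) 1))) :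
    (tdm Λ μ = 1 → Λ 1 1 = 1) ∧ (tdm Λ μ = 1 ↔ Λ 1 1 = 1) := by
  obtain ⟨u₀, hu₀, hball⟩ := hdiag
  have forward : tdm Λ μ = 1 → Λ 1 1 = 1 := tdc_eq_one_of_tdm_eq_one hC hΛ hμ hu₀.1
    fun ε hε => (hball ε hε).trans_le (measure_mono inter_subset_left)
  exact ⟨forward, forward, tdm_eq_one_of_tdc_eq_one hC hΛ hμ⟩
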